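/- Let β, κ > 0 and let E, B ∈ ℝ³ satisfy the Born–Infeld constitutive equation D = (E + κ²(E·B)B)/√(1 − 2βs) with s = (‖E‖² − ‖B‖²)/2 + (κ²/2)(E·B)². Then ‖E‖² = (1 + β‖B‖²)(‖D‖² + κ²(2 + κ²‖B‖²)‖B × D‖²) / ((1 + κ²‖B‖²)(1 + β‖D‖² + κ²‖B‖² + βκ²‖B × D‖²)) and (E·B)² = (B·D)²(1 + β‖B‖²) / ((1 + κ²‖B‖²)(1 + β‖D‖² + κ²‖B‖² + βκ²‖B × D‖²)). -/

import Mathlib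

noncomputable section

abbrev V3 := Fin 3 → ℝ

def dot (a b : V3) : ℝ := ∑ i, a i * b i

/-!
Write `u = ‖E‖²`, `w = (E·B)²`, `b = ‖B‖²`, `k = κ²` and `D = c • (E + (k (E·B)) • B)` with
`c = (1 - 2βs)^(-1/2)`. Bilinearity gives `B·D = c (E·B)(1 + k b)` and, with Lagrange's identity
`‖B × D‖² = b ‖D‖² - (B·D)²`,
`‖D‖² + k ‖B × D‖² = c² (1 + k b)(u + k w)` and `‖D‖² + k (2 + k b) ‖B × D‖² = c² u (1 + k b)²`.
Since `1 - 2βs = 1 + β b - β (u + k w)`, the first of these turns the common denominator into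
`c² (1 + k b)² (1 + β b)`, and both formulas follow by cancellation.
-/

open Matrix

theorem dot_eq_dotProduct (a b : V3) : dot a b = a ⬝ᵥ b := rfl

section BornInfeldDisplacement

variable {R n : Type*} [CommRing R] [Fintype n] {c k : R} {E B D : n → R}

theorem dotProduct_displacement (hD : D = c • (E + (k * (E ⬝ᵥ B)) • B)) :
    B ⬝ᵥ D = c * (E ⬝ᵥ B) * (1 + k * (B ⬝ᵥ B)) := by
  subst hD
  simp only [dotProduct_smul, dotProduct_add, smul_eq_mul, dotProduct_comm B E]
  ring

theorem dotProduct_self_displacement (hD : D = c • (E + (k * (E ⬝ᵥ B)) • B)) :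
    D ⬝ᵥ D = c ^ 2 * (E ⬝ᵥ E + k * (E ⬝ᵥ B) ^ 2 * (2 + k * (B ⬝ᵥ B))) := by
  subst hD
  simp only [dotProduct_smul, smul_dotProduct, dotProduct_add, add_dotProduct, smul_eq_mul,
    dotProduct_comm B E]
  ring

theorem displacement_add_lagrange (hD : D = c • (E + (k * (E ⬝ᵥ B)) • B)) :
    D ⬝ᵥ D + k * ((B ⬝ᵥ B) * (D ⬝ᵥ D) - (B ⬝ᵥ D) ^ 2)
      = c ^ 2 * (1 + k * (B ⬝ᵥ B)) * (E ⬝ᵥ E + k * (E ⬝ᵥ B) ^ 2) := by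
  rw [dotProduct_self_displacement hD, dotProduct_displacement hD]
  ring

theorem displacement_add_two_lagrange (hD : D = c • (E + (k * (E ⬝ᵥ B)) • B)) :
    D ⬝ᵥ D + k * (2 + k * (B ⬝ᵥ B)) * ((B ⬝ᵥ B) * (D ⬝ᵥ D) - (B ⬝ᵥ D) ^ 2)
      = c ^ 2 * (E ⬝ᵥ E) * (1 + k * (B ⬝ᵥ B)) ^ 2 := by
  rw [dotProduct_self_displacement hD, dotProduct_displacement hD]
  ring

end BornInfeldDisplacement

theorem BI_dyonic_E_sq_general (β κ : ℝ) (hβ : 0 < β) (E B D : V3)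
    (s : ℝ) (hs : s = (dot E E - dot B B) / 2 + κ ^ 2 / 2 * (dot E B) ^ 2)
    (hpos : 0 < 1 - 2 * β * s)
    (hD : D = (Real.sqrt (1 - 2 * β * s))⁻¹ • (E + (κ ^ 2 * dot E B) • B)) :
    dot E E = (1 + β * dot B B)
        * (dot D D + κ ^ 2 * (2 + κ ^ 2 * dot B B) * dot (crossProduct B D) (crossProduct B D))
      / ((1 + κ ^ 2 * dot B B)
        * (1 + β * dot D D + κ ^ 2 * dot B B
            + β * κ ^ 2 * dot (crossProduct B D) (crossProduct B D))) ∧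
    (dot E B) ^ 2 = (dot B D) ^ 2 * (1 + β * dot B B)
      / ((1 + κ ^ 2 * dot B B)
        * (1 + β * dot D D + κ ^ 2 * dot B B
            + β * κ ^ 2 * dot (crossProduct B D) (crossProduct B D))) := by
  simp only [dot_eq_dotProduct, cross_dot_cross, dotProduct_comm D B, ← sq] at hs hD ⊢
  have h_radicand : 1 - 2 * β * s = 1 + β * (B ⬝ᵥ B) - β * (E ⬝ᵥ E + κ ^ 2 * (E ⬝ᵥ B) ^ 2) := by
    rw [hs]; ring
  set c := (√(1 - 2 * β * s))⁻¹
  have hc0 : c ≠ 0 := inv_ne_zero (Real.sqrt_pos.mpr hpos).ne'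
  have hc : c ^ 2 * (1 + β * (B ⬝ᵥ B) - β * (E ⬝ᵥ E + κ ^ 2 * (E ⬝ᵥ B) ^ 2)) = 1 := by
    rw [← h_radicand, inv_pow, Real.sq_sqrt hpos.le, inv_mul_cancel₀ hpos.ne']
  have hb : 0 ≤ B ⬝ᵥ B := by simpa using dotProduct_self_star_nonneg B
  have hA : 0 < 1 + κ ^ 2 * (B ⬝ᵥ B) := by positivity
  have hBb : 0 < 1 + β * (B ⬝ᵥ B) := by positivity
  have hden : 1 + β * (D ⬝ᵥ D) + κ ^ 2 * (B ⬝ᵥ B)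
        + β * κ ^ 2 * ((B ⬝ᵥ B) * (D ⬝ᵥ D) - (B ⬝ᵥ D) ^ 2)
      = c ^ 2 * (1 + κ ^ 2 * (B ⬝ᵥ B)) * (1 + β * (B ⬝ᵥ B)) := by
    linear_combination β * displacement_add_lagrange hD - (1 + κ ^ 2 * (B ⬝ᵥ B)) * hc
  rw [hden, displacement_add_two_lagrange hD, dotProduct_displacement hD]
  constructor <;> field_simp

theorem BI_dyonic_E_sq (β κ : ℝ) (hβ : 0 < β) (hκ : 0 < κ) (E B D : V3)
    (s : ℝ) (hs : s = (dot E E - dot B B) / 2 + κ ^ 2 / 2 * (dot E B) ^ 2)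
    (hpos : 0 < 1 - 2 * β * s)
    (hD : D = (Real.sqrt (1 - 2 * β * s))⁻¹ • (E + (κ ^ 2 * dot E B) • B)) :
    dot E E = (1 + β * dot B B)
        * (dot D D + κ ^ 2 * (2 + κ ^ 2 * dot B B) * dot (crossProduct B D) (crossProduct B D))
      / ((1 + κ ^ 2 * dot B B)
        * (1 + β * dot D D + κ ^ 2 * dot B B
            + β * κ ^ 2 * dot (crossProduct B D) (crossProduct B D))) ∧
    (dot E B) ^ 2 = (dot B D) ^ 2 * (1 + β * dot B B)
      / ((1 + κ ^ 2 * dot B B)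
        * (1 + β * dot D D + κ ^ 2 * dot B B
            + β * κ ^ 2 * dot (crossProduct B D) (crossProduct B D))) :=
  BI_dyonic_E_sq_general β κ hβ E B D s hs hpos hD
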